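/- Let ψ be a Drinfeld twist for a commutative Hopf algebra O(H), and set Q := Σ S(ψ¹)ψ². Then the element Q^{-1}·S(Q) is grouplike in O(H), i.e. Δ(Q^{-1}S(Q)) = Q^{-1}S(Q) ⊗ Q^{-1}S(Q) and ε(Q^{-1}S(Q)) = 1. -/

import Mathlib

open TensorProduct

/-- A Drinfeld twist for a commutative Hopf algebra `A` over `k`: an invertible element
`ψ ∈ A ⊗ A` satisfying `(Δ⊗id)(ψ)(ψ⊗1) = (id⊗Δ)(ψ)(1⊗ψ)` and `(ε⊗id)(ψ) = (id⊗ε)(ψ) = 1`. -/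
def IsDrinfeldTwist (k : Type*) {A : Type*} [CommSemiring k] [CommRing A]
    [HopfAlgebra k A] (ψ : A ⊗[k] A) : Prop :=
  IsUnit ψ ∧
  (Algebra.TensorProduct.assoc k k k A A A)
      ((LinearMap.rTensor A (Coalgebra.comul (R := k) (A := A))) ψ * (ψ ⊗ₜ[k] (1 : A)))
    = (LinearMap.lTensor A (Coalgebra.comul (R := k) (A := A))) ψ * ((1 : A) ⊗ₜ[k] ψ) ∧
  (TensorProduct.lid k A) ((LinearMap.rTensor A (Coalgebra.counit (R := k) (A := A))) ψ) = 1 ∧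
  (TensorProduct.rid k A) ((LinearMap.lTensor A (Coalgebra.counit (R := k) (A := A))) ψ) = 1

section AuxCocycle

lemma DT.cocycle_aux {M R : Type*} [Monoid M] [CommRing R] (σ : M → M → R)
    (hc : ∀ x y z, σ (x*y) z * σ x y = σ x (y*z) * σ y z)
    (hr : ∀ x, σ x 1 = 1)
    (a b ai bi : M) (hia : ai * a = 1) (hb : b * bi = 1) :
    σ (bi*ai) (a*b) * σ bi ai * σ a b = σ bi b * σ ai a := by
  have e1 : bi * ai * a = bi := by rw [mul_assoc, hia, mul_one]
  have c1 := hc (bi*ai) a b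
  rw [e1] at c1
  have c2 := hc bi ai a
  rw [hia, hr bi, one_mul] at c2
  linear_combination (-(σ bi ai)) * c1 + σ bi b * c2

lemma DT.cocycle_key {M R : Type*} [Monoid M] [CommRing R] (σ : M → M → R)
    (hu : ∀ x y, IsUnit (σ x y))
    (hc : ∀ x y z, σ (x*y) z * σ x y = σ x (y*z) * σ y z)
    (hr : ∀ x, σ x 1 = 1)
    (a b ai bi ci : M) (hai : a * ai = 1) (hia : ai * a = 1)
    (hb : b * bi = 1) (hib : bi * b = 1)
    (hci : ci * (a*b) = 1) (hic : (a*b) * ci = 1) :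
    σ ai a * σ bi b * σ (a*b) ci = σ a ai * σ b bi * σ ci (a*b) := by
  have h2 : (a*b) * (bi*ai) = 1 := by
    rw [mul_assoc, ← mul_assoc b, hb, one_mul, hai]
  have hciE : ci = bi * ai := left_inv_eq_right_inv hci h2
  rw [hciE]
  have I1 := DT.cocycle_aux σ hc hr a b ai bi hia hb
  have I2 := DT.cocycle_aux σ hc hr bi ai b a hb hia
  refine ((hu a b).mul (hu bi ai)).mul_left_cancel ?_
  linear_combination (σ ai a * σ bi b) * I2 - (σ a ai * σ b bi) * I1

end AuxCocycle

section AuxAntipode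

variable {k A : Type*} [CommSemiring k] [CommRing A] [HopfAlgebra k A]
open Coalgebra HopfAlgebra

lemma DT.antipode_one : HopfAlgebra.antipode (R := k) (A := A) 1 = 1 := by
  have := HopfAlgebra.mul_antipode_rTensor_comul_apply (R := k) (A := A) (a := 1)
  simpa [Algebra.TensorProduct.one_def] using this

lemma DT.conv3_eq {B : Type*} [CommRing B] [Algebra k B] (f g h : A →ₗ[k] B) (a : A)
    {ι κ Λ : Type*}
    (𝒜 : Coalgebra.Repr k a ι) (𝒜₁ : ∀ i, Coalgebra.Repr k (𝒜.left i) κ)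
    (𝒜₂ : ∀ i, Coalgebra.Repr k (𝒜.right i) Λ) :
    ∑ i ∈ 𝒜.index, ∑ j ∈ (𝒜₁ i).index,
        f ((𝒜₁ i).left j) * (g ((𝒜₁ i).right j) * h (𝒜.right i))
    = ∑ i ∈ 𝒜.index, ∑ j ∈ (𝒜₂ i).index,
        f (𝒜.left i) * (g ((𝒜₂ i).left j) * h ((𝒜₂ i).right j)) := by
  have H := Coalgebra.sum_map_tmul_tmul_eq (R := k) f g h a (repr := 𝒜) (a₁ := 𝒜₁) (a₂ := 𝒜₂)
  have := congrArg (LinearMap.mul' k B ∘ₗ LinearMap.lTensor B (LinearMap.mul' k B)) H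
  simpa [map_sum] using this.symm

/-- product representation -/
def DT.mulRepr {x y : A} {ι κ : Type*} (rx : Coalgebra.Repr k x ι) (ry : Coalgebra.Repr k y κ) :
    Coalgebra.Repr k (x * y) (ι × κ) where
  index := rx.index ×ˢ ry.index
  left := fun p => rx.left p.1 * ry.left p.2
  right := fun p => rx.right p.1 * ry.right p.2
  eq := by
    rw [Bialgebra.comul_mul, ← rx.eq, ← ry.eq, Finset.sum_mul_sum]
    rw [Finset.sum_product]
    simp [Algebra.TensorProduct.tmul_mul_tmul]

lemma DT.antipode_mul (a b : A) :
    HopfAlgebra.antipode (R := k) (a * b) =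
      HopfAlgebra.antipode (R := k) a * HopfAlgebra.antipode (R := k) b := by
  set S : A →ₗ[k] A := HopfAlgebra.antipode (R := k) (A := A) with hS
  set 𝒜 : Coalgebra.Repr k a (A × A) := ℛ k a with h𝒜
  set ℬ : Coalgebra.Repr k b (A × A) := ℛ k b with hℬ
  set 𝒜₁ : ∀ i, Coalgebra.Repr k (𝒜.left i) (A × A) := fun i => ℛ k _ with h𝒜₁
  set 𝒜₂ : ∀ i, Coalgebra.Repr k (𝒜.right i) (A × A) := fun i => ℛ k _ with h𝒜₂
  set ℬ₁ : ∀ j, Coalgebra.Repr k (ℬ.left j) (A × A) := fun j => ℛ k _ with hℬ₁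
  set ℬ₂ : ∀ j, Coalgebra.Repr k (ℬ.right j) (A × A) := fun j => ℛ k _ with hℬ₂
  have ha : ∑ i ∈ 𝒜.index, counit (R := k) (𝒜.right i) • 𝒜.left i = a := by
    have := congrArg (TensorProduct.rid k A) (Coalgebra.sum_tmul_counit_eq (R := k) 𝒜)
    rw [map_sum] at this
    simp only [TensorProduct.rid_tmul] at this
    rwa [one_smul] at this
  have hb : ∑ j ∈ ℬ.index, counit (R := k) (ℬ.right j) • ℬ.left j = b := by
    have := congrArg (TensorProduct.rid k A) (Coalgebra.sum_tmul_counit_eq (R := k) ℬ)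
    rw [map_sum] at this
    simp only [TensorProduct.rid_tmul] at this
    rwa [one_smul] at this
  have ha' : ∑ i ∈ 𝒜.index, counit (R := k) (𝒜.left i) • 𝒜.right i = a := by
    have := congrArg (TensorProduct.lid k A) (Coalgebra.sum_counit_tmul_eq (R := k) 𝒜)
    rw [map_sum] at this
    simp only [TensorProduct.lid_tmul] at this
    rwa [one_smul] at this
  have hb' : ∑ j ∈ ℬ.index, counit (R := k) (ℬ.left j) • ℬ.right j = b := by
    have := congrArg (TensorProduct.lid k A) (Coalgebra.sum_counit_tmul_eq (R := k) ℬ)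
    rw [map_sum] at this
    simp only [TensorProduct.lid_tmul] at this
    rwa [one_smul] at this
  have hSa : S a = ∑ i ∈ 𝒜.index, counit (R := k) (𝒜.left i) • S (𝒜.right i) := by
    have := congrArg S ha'
    rw [map_sum] at this
    simp only [map_smul] at this
    exact this.symm
  have hSb : S b = ∑ j ∈ ℬ.index, counit (R := k) (ℬ.left j) • S (ℬ.right j) := by
    have := congrArg S hb'
    rw [map_sum] at this
    simp only [map_smul] at this
    exact this.symm
  calc S (a * b)
      = ∑ i ∈ 𝒜.index, ∑ j ∈ ℬ.index,
          (counit (R := k) (𝒜.right i) * counit (R := k) (ℬ.right j)) •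
            S (𝒜.left i * ℬ.left j) := by
        conv_lhs => rw [← ha, ← hb, Finset.sum_mul_sum]
        rw [map_sum]
        refine Finset.sum_congr rfl fun i _ => ?_
        rw [map_sum]
        refine Finset.sum_congr rfl fun j _ => ?_
        rw [smul_mul_smul_comm, map_smul]
    _ = ∑ i ∈ 𝒜.index, ∑ j ∈ ℬ.index, ∑ p ∈ (𝒜₂ i).index, ∑ q ∈ (ℬ₂ j).index,
          S (𝒜.left i * ℬ.left j) *
            (((𝒜₂ i).left p * (ℬ₂ j).left q) *
              (S ((𝒜₂ i).right p) * S ((ℬ₂ j).right q))) := by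
        refine Finset.sum_congr rfl fun i _ => Finset.sum_congr rfl fun j _ => ?_
        calc (counit (R := k) (𝒜.right i) * counit (R := k) (ℬ.right j)) •
                S (𝒜.left i * ℬ.left j)
            = S (𝒜.left i * ℬ.left j) *
                ((counit (R := k) (𝒜.right i) • (1 : A)) *
                 (counit (R := k) (ℬ.right j) • (1 : A))) := by
              rw [smul_mul_smul_comm, mul_one, mul_smul_comm, mul_one]
          _ = S (𝒜.left i * ℬ.left j) *
                ((∑ p ∈ (𝒜₂ i).index, (𝒜₂ i).left p * S ((𝒜₂ i).right p)) *
                 (∑ q ∈ (ℬ₂ j).index, (ℬ₂ j).left q * S ((ℬ₂ j).right q))) := by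
              rw [HopfAlgebra.sum_mul_antipode_eq_smul (R := k) (𝒜₂ i),
                HopfAlgebra.sum_mul_antipode_eq_smul (R := k) (ℬ₂ j)]
          _ = _ := by
              rw [Finset.sum_mul_sum, Finset.mul_sum]
              refine Finset.sum_congr rfl fun p _ => ?_
              rw [Finset.mul_sum]
              refine Finset.sum_congr rfl fun q _ => ?_
              ring
    _ = ∑ j ∈ ℬ.index, ∑ q ∈ (ℬ₂ j).index, ∑ i ∈ 𝒜.index, ∑ p ∈ (𝒜₂ i).index,
          S (𝒜.left i * ℬ.left j) *
            (((𝒜₂ i).left p * (ℬ₂ j).left q) *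
              (S ((𝒜₂ i).right p) * S ((ℬ₂ j).right q))) := by
        rw [Finset.sum_comm]
        refine Finset.sum_congr rfl fun j _ => ?_
        calc ∑ i ∈ 𝒜.index, ∑ p ∈ (𝒜₂ i).index, ∑ q ∈ (ℬ₂ j).index,
              S (𝒜.left i * ℬ.left j) *
                (((𝒜₂ i).left p * (ℬ₂ j).left q) *
                  (S ((𝒜₂ i).right p) * S ((ℬ₂ j).right q)))
            = ∑ i ∈ 𝒜.index, ∑ q ∈ (ℬ₂ j).index, ∑ p ∈ (𝒜₂ i).index,
              S (𝒜.left i * ℬ.left j) *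
                (((𝒜₂ i).left p * (ℬ₂ j).left q) *
                  (S ((𝒜₂ i).right p) * S ((ℬ₂ j).right q))) :=
              Finset.sum_congr rfl fun i _ => Finset.sum_comm
          _ = _ := Finset.sum_comm
    _ = ∑ j ∈ ℬ.index, ∑ q ∈ (ℬ₂ j).index, ∑ i ∈ 𝒜.index, ∑ p ∈ (𝒜₁ i).index,
          S ((𝒜₁ i).left p * ℬ.left j) *
            (((𝒜₁ i).right p * (ℬ₂ j).left q) *
              (S (𝒜.right i) * S ((ℬ₂ j).right q))) := by
        refine Finset.sum_congr rfl fun j _ => Finset.sum_congr rfl fun q _ => ?_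
        have := (DT.conv3_eq (k := k)
          (S ∘ₗ LinearMap.mulRight k (ℬ.left j))
          (LinearMap.mulRight k ((ℬ₂ j).left q))
          (LinearMap.mulRight k (S ((ℬ₂ j).right q)) ∘ₗ S)
          a 𝒜 𝒜₁ 𝒜₂).symm
        simpa only [LinearMap.comp_apply, LinearMap.mulRight_apply] using this
    _ = ∑ i ∈ 𝒜.index, ∑ p ∈ (𝒜₁ i).index, ∑ j ∈ ℬ.index, ∑ q ∈ (ℬ₂ j).index,
          S ((𝒜₁ i).left p * ℬ.left j) *
            (((𝒜₁ i).right p * (ℬ₂ j).left q) *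
              (S (𝒜.right i) * S ((ℬ₂ j).right q))) := by
        calc ∑ j ∈ ℬ.index, ∑ q ∈ (ℬ₂ j).index, ∑ i ∈ 𝒜.index, ∑ p ∈ (𝒜₁ i).index,
              S ((𝒜₁ i).left p * ℬ.left j) *
                (((𝒜₁ i).right p * (ℬ₂ j).left q) *
                  (S (𝒜.right i) * S ((ℬ₂ j).right q)))
            = ∑ j ∈ ℬ.index, ∑ i ∈ 𝒜.index, ∑ q ∈ (ℬ₂ j).index, ∑ p ∈ (𝒜₁ i).index,
              S ((𝒜₁ i).left p * ℬ.left j) *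
                (((𝒜₁ i).right p * (ℬ₂ j).left q) *
                  (S (𝒜.right i) * S ((ℬ₂ j).right q))) :=
              Finset.sum_congr rfl fun j _ => Finset.sum_comm
          _ = ∑ i ∈ 𝒜.index, ∑ j ∈ ℬ.index, ∑ q ∈ (ℬ₂ j).index, ∑ p ∈ (𝒜₁ i).index,
              S ((𝒜₁ i).left p * ℬ.left j) *
                (((𝒜₁ i).right p * (ℬ₂ j).left q) *
                  (S (𝒜.right i) * S ((ℬ₂ j).right q))) := Finset.sum_comm
          _ = ∑ i ∈ 𝒜.index, ∑ j ∈ ℬ.index, ∑ p ∈ (𝒜₁ i).index, ∑ q ∈ (ℬ₂ j).index,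
              S ((𝒜₁ i).left p * ℬ.left j) *
                (((𝒜₁ i).right p * (ℬ₂ j).left q) *
                  (S (𝒜.right i) * S ((ℬ₂ j).right q))) :=
              Finset.sum_congr rfl fun i _ => Finset.sum_congr rfl fun j _ => Finset.sum_comm
          _ = _ :=
              Finset.sum_congr rfl fun i _ => Finset.sum_comm
    _ = ∑ i ∈ 𝒜.index, ∑ p ∈ (𝒜₁ i).index, ∑ j ∈ ℬ.index, ∑ q ∈ (ℬ₁ j).index,
          S ((𝒜₁ i).left p * (ℬ₁ j).left q) *
            (((𝒜₁ i).right p * (ℬ₁ j).right q) *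
              (S (𝒜.right i) * S (ℬ.right j))) := by
        refine Finset.sum_congr rfl fun i _ => Finset.sum_congr rfl fun p _ => ?_
        have := (DT.conv3_eq (k := k)
          (S ∘ₗ LinearMap.mulLeft k ((𝒜₁ i).left p))
          (LinearMap.mulLeft k ((𝒜₁ i).right p))
          (LinearMap.mulLeft k (S (𝒜.right i)) ∘ₗ S)
          b ℬ ℬ₁ ℬ₂).symm
        simpa only [LinearMap.comp_apply, LinearMap.mulLeft_apply] using this
    _ = ∑ i ∈ 𝒜.index, ∑ j ∈ ℬ.index, ∑ p ∈ (𝒜₁ i).index, ∑ q ∈ (ℬ₁ j).index,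
          S ((𝒜₁ i).left p * (ℬ₁ j).left q) *
            (((𝒜₁ i).right p * (ℬ₁ j).right q) *
              (S (𝒜.right i) * S (ℬ.right j))) := by
        refine Finset.sum_congr rfl fun i _ => ?_
        rw [Finset.sum_comm]
    _ = ∑ i ∈ 𝒜.index, ∑ j ∈ ℬ.index,
          (counit (R := k) (𝒜.left i) * counit (R := k) (ℬ.left j)) •
            (S (𝒜.right i) * S (ℬ.right j)) := by
        refine Finset.sum_congr rfl fun i _ => Finset.sum_congr rfl fun j _ => ?_
        have collapse :
            ∑ p ∈ (𝒜₁ i).index, ∑ q ∈ (ℬ₁ j).index,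
              S ((𝒜₁ i).left p * (ℬ₁ j).left q) *
                ((𝒜₁ i).right p * (ℬ₁ j).right q)
            = counit (R := k) (𝒜.left i * ℬ.left j) • (1 : A) := by
          have := HopfAlgebra.sum_antipode_mul_eq_smul (R := k)
            (DT.mulRepr (𝒜₁ i) (ℬ₁ j))
          simp only [DT.mulRepr] at this
          rw [Finset.sum_product] at this
          exact this
        calc ∑ p ∈ (𝒜₁ i).index, ∑ q ∈ (ℬ₁ j).index,
              S ((𝒜₁ i).left p * (ℬ₁ j).left q) *
                (((𝒜₁ i).right p * (ℬ₁ j).right q) *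
                  (S (𝒜.right i) * S (ℬ.right j)))
            = (∑ p ∈ (𝒜₁ i).index, ∑ q ∈ (ℬ₁ j).index,
                S ((𝒜₁ i).left p * (ℬ₁ j).left q) *
                  ((𝒜₁ i).right p * (ℬ₁ j).right q)) *
                (S (𝒜.right i) * S (ℬ.right j)) := by
              rw [Finset.sum_mul]
              refine Finset.sum_congr rfl fun p _ => ?_
              rw [Finset.sum_mul]
              refine Finset.sum_congr rfl fun q _ => ?_
              ring
          _ = _ := by
              rw [collapse, Bialgebra.counit_mul, smul_mul_assoc, one_mul]
    _ = S a * S b := by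
        rw [hSa, hSb, Finset.sum_mul_sum]
        refine Finset.sum_congr rfl fun i _ => Finset.sum_congr rfl fun j _ => ?_
        rw [smul_mul_smul_comm]

end AuxAntipode

section AuxConv

variable {k A R : Type*} [CommSemiring k] [CommRing A] [HopfAlgebra k A]
  [CommRing R] [Algebra k R]
open Coalgebra HopfAlgebra

/-- The antipode as an algebra homomorphism (the Hopf algebra is commutative). -/
noncomputable def DT.antipodeAlgHom : A →ₐ[k] A :=
  AlgHom.ofLinearMap (HopfAlgebra.antipode (R := k)) DT.antipode_one DT.antipode_mul

@[simp] lemma DT.antipodeAlgHom_apply (x : A) :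
    (DT.antipodeAlgHom (k := k) (A := A)) x = HopfAlgebra.antipode (R := k) x := rfl

/-- Convolution product of algebra-valued points of the Hopf algebra. -/
noncomputable def DT.conv (f g : A →ₐ[k] R) : A →ₐ[k] R :=
  (Algebra.TensorProduct.productMap f g).comp (Bialgebra.comulAlgHom k A)

/-- The unit point. -/
noncomputable def DT.convE : A →ₐ[k] R := (Algebra.ofId k R).comp (Bialgebra.counitAlgHom k A)

lemma DT.convE_apply (x : A) : (DT.convE (k := k) (A := A) (R := R)) x
    = algebraMap k R (counit (R := k) x) := rfl

lemma DT.conv_repr (f g : A →ₐ[k] R) (x : A) {ι : Type*} (r : Coalgebra.Repr k x ι) :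
    DT.conv f g x = ∑ i ∈ r.index, f (r.left i) * g (r.right i) := by
  have h0 : DT.conv f g x = (Algebra.TensorProduct.productMap f g) (comul (R := k) x) := rfl
  rw [h0, ← r.eq, map_sum]
  simp [Algebra.TensorProduct.productMap_apply_tmul]

lemma DT.conv_assoc (f g h : A →ₐ[k] R) :
    DT.conv (DT.conv f g) h = DT.conv f (DT.conv g h) := by
  ext x
  let r : Coalgebra.Repr k x (A × A) := ℛ k x
  let r1 : ∀ i, Coalgebra.Repr k (r.left i) (A × A) := fun i => ℛ k _
  let r2 : ∀ i, Coalgebra.Repr k (r.right i) (A × A) := fun i => ℛ k _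
  calc (DT.conv (DT.conv f g) h) x
      = ∑ i ∈ r.index, DT.conv f g (r.left i) * h (r.right i) := DT.conv_repr _ _ x r
    _ = ∑ i ∈ r.index, ∑ p ∈ (r1 i).index,
          f ((r1 i).left p) * (g ((r1 i).right p) * h (r.right i)) := by
        refine Finset.sum_congr rfl fun i _ => ?_
        rw [DT.conv_repr f g _ (r1 i), Finset.sum_mul]
        exact Finset.sum_congr rfl fun p _ => mul_assoc _ _ _
    _ = ∑ i ∈ r.index, ∑ p ∈ (r2 i).index,
          f (r.left i) * (g ((r2 i).left p) * h ((r2 i).right p)) := by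
        have := DT.conv3_eq (f.toLinearMap) (g.toLinearMap) (h.toLinearMap) x r r1 r2
        simpa only [AlgHom.toLinearMap_apply] using this
    _ = ∑ i ∈ r.index, f (r.left i) * DT.conv g h (r.right i) := by
        refine Finset.sum_congr rfl fun i _ => ?_
        rw [DT.conv_repr g h _ (r2 i), Finset.mul_sum]
    _ = (DT.conv f (DT.conv g h)) x := (DT.conv_repr _ _ x r).symm

lemma DT.repr_counit_left {x : A} {ι : Type*} (r : Coalgebra.Repr k x ι) :
    ∑ i ∈ r.index, counit (R := k) (r.left i) • r.right i = x := by
  have := congrArg (TensorProduct.lid k A) (Coalgebra.sum_counit_tmul_eq (R := k) r)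
  rw [map_sum] at this
  simp only [TensorProduct.lid_tmul] at this
  rwa [one_smul] at this

lemma DT.repr_counit_right {x : A} {ι : Type*} (r : Coalgebra.Repr k x ι) :
    ∑ i ∈ r.index, counit (R := k) (r.right i) • r.left i = x := by
  have := congrArg (TensorProduct.rid k A) (Coalgebra.sum_tmul_counit_eq (R := k) r)
  rw [map_sum] at this
  simp only [TensorProduct.rid_tmul] at this
  rwa [one_smul] at this

lemma DT.convE_conv (f : A →ₐ[k] R) : DT.conv DT.convE f = f := by
  ext x
  let r : Coalgebra.Repr k x (A × A) := ℛ k x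
  rw [DT.conv_repr _ _ x r]
  calc ∑ i ∈ r.index, DT.convE (r.left i) * f (r.right i)
      = ∑ i ∈ r.index, f (counit (R := k) (r.left i) • r.right i) := by
        refine Finset.sum_congr rfl fun i _ => ?_
        rw [DT.convE_apply, map_smul, Algebra.smul_def]
    _ = f x := by rw [← map_sum, DT.repr_counit_left r]

lemma DT.conv_convE (f : A →ₐ[k] R) : DT.conv f DT.convE = f := by
  ext x
  let r : Coalgebra.Repr k x (A × A) := ℛ k x
  rw [DT.conv_repr _ _ x r]
  calc ∑ i ∈ r.index, f (r.left i) * DT.convE (r.right i)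
      = ∑ i ∈ r.index, f (counit (R := k) (r.right i) • r.left i) := by
        refine Finset.sum_congr rfl fun i _ => ?_
        rw [DT.convE_apply, map_smul, Algebra.smul_def, mul_comm]
    _ = f x := by rw [← map_sum, DT.repr_counit_right r]

lemma DT.conv_antipode_left (f : A →ₐ[k] R) :
    DT.conv (f.comp DT.antipodeAlgHom) f = DT.convE := by
  ext x
  let r : Coalgebra.Repr k x (A × A) := ℛ k x
  rw [DT.conv_repr _ _ x r]
  calc ∑ i ∈ r.index, (f.comp DT.antipodeAlgHom) (r.left i) * f (r.right i)
      = f (∑ i ∈ r.index, HopfAlgebra.antipode (R := k) (r.left i) * r.right i) := by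
        rw [map_sum]
        exact Finset.sum_congr rfl fun i _ => (map_mul f _ _).symm
    _ = DT.convE x := by
        rw [HopfAlgebra.sum_antipode_mul_eq_smul (R := k) r, map_smul, map_one,
          DT.convE_apply, Algebra.smul_def, mul_one]

lemma DT.conv_antipode_right (f : A →ₐ[k] R) :
    DT.conv f (f.comp DT.antipodeAlgHom) = DT.convE := by
  ext x
  let r : Coalgebra.Repr k x (A × A) := ℛ k x
  rw [DT.conv_repr _ _ x r]
  calc ∑ i ∈ r.index, f (r.left i) * (f.comp DT.antipodeAlgHom) (r.right i)
      = f (∑ i ∈ r.index, r.left i * HopfAlgebra.antipode (R := k) (r.right i)) := by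
        rw [map_sum]
        exact Finset.sum_congr rfl fun i _ => (map_mul f _ _).symm
    _ = DT.convE x := by
        rw [HopfAlgebra.sum_mul_antipode_eq_smul (R := k) r, map_smul, map_one,
          DT.convE_apply, Algebra.smul_def, mul_one]

lemma DT.conv_inv_unique {g i i' : A →ₐ[k] R}
    (h1 : DT.conv g i = DT.convE) (h2 : DT.conv i' g = DT.convE) : i' = i := by
  calc i' = DT.conv i' DT.convE := (DT.conv_convE i').symm
    _ = DT.conv i' (DT.conv g i) := by rw [h1]
    _ = DT.conv (DT.conv i' g) i := (DT.conv_assoc _ _ _).symm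
    _ = DT.conv DT.convE i := by rw [h2]
    _ = i := DT.convE_conv i

lemma DT.compS_compS (f : A →ₐ[k] R) :
    (f.comp DT.antipodeAlgHom).comp DT.antipodeAlgHom = f :=
  (DT.conv_inv_unique (DT.conv_antipode_right (f.comp DT.antipodeAlgHom))
    (DT.conv_antipode_right f)).symm

/-- Wrapper type for the convolution monoid of points. -/
structure DT.ConvPt (k A R : Type*) [CommSemiring k] [CommRing A] [HopfAlgebra k A]
    [CommRing R] [Algebra k R] where
  f : A →ₐ[k] R

noncomputable instance : Monoid (DT.ConvPt k A R) where
  mul x y := ⟨DT.conv x.f y.f⟩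
  one := ⟨DT.convE⟩
  mul_assoc x y z := congrArg DT.ConvPt.mk (DT.conv_assoc x.f y.f z.f)
  one_mul x := congrArg DT.ConvPt.mk (DT.convE_conv x.f)
  mul_one x := congrArg DT.ConvPt.mk (DT.conv_convE x.f)

end AuxConv

section AuxSigma

variable {k A R : Type*} [CommSemiring k] [CommRing A] [HopfAlgebra k A]
  [CommRing R] [Algebra k R]
open Coalgebra HopfAlgebra

/-- Evaluation of the twist at a pair of points. -/
noncomputable def DT.sigma (ψ : A ⊗[k] A) (f g : A →ₐ[k] R) : R :=
  Algebra.TensorProduct.productMap f g ψ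

lemma DT.sigma_isUnit {ψ : A ⊗[k] A} (hψ : IsUnit ψ) (f g : A →ₐ[k] R) :
    IsUnit (DT.sigma ψ f g) := hψ.map _

lemma DT.sigma_cocycle (ψ : A ⊗[k] A)
    (htw : (Algebra.TensorProduct.assoc k k k A A A)
      ((LinearMap.rTensor A (Coalgebra.comul (R := k) (A := A))) ψ * (ψ ⊗ₜ[k] (1 : A)))
    = (LinearMap.lTensor A (Coalgebra.comul (R := k) (A := A))) ψ * ((1 : A) ⊗ₜ[k] ψ))
    (f g h : A →ₐ[k] R) :
    DT.sigma ψ (DT.conv f g) h * DT.sigma ψ f g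
      = DT.sigma ψ f (DT.conv g h) * DT.sigma ψ g h := by
  classical
  set Θ : A ⊗[k] (A ⊗[k] A) →ₐ[k] R :=
    Algebra.TensorProduct.productMap f (Algebra.TensorProduct.productMap g h) with hΘ
  set P : (A ⊗[k] A) ⊗[k] A →ₐ[k] R :=
    Algebra.TensorProduct.productMap (Algebra.TensorProduct.productMap f g) h with hP
  have hPw : ∀ (w : A ⊗[k] A) (y : A),
      P (w ⊗ₜ[k] y) = Algebra.TensorProduct.productMap f g w * h y := by
    intro w y
    induction w using TensorProduct.induction_on with
    | zero => simp
    | tmul x1 x2 => simp [hP, Algebra.TensorProduct.productMap_apply_tmul]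
    | add u v hu hv =>
        rw [TensorProduct.add_tmul, map_add, hu, hv, map_add, add_mul]
  have hΘw : ∀ (x : A) (w : A ⊗[k] A),
      Θ (x ⊗ₜ[k] w) = f x * Algebra.TensorProduct.productMap g h w := by
    intro x w
    induction w using TensorProduct.induction_on with
    | zero => simp
    | tmul y1 y2 => simp [hΘ, Algebra.TensorProduct.productMap_apply_tmul, mul_assoc]
    | add u v hu hv =>
        rw [TensorProduct.tmul_add, map_add, hu, hv, map_add, mul_add]
  have hPassoc : ∀ u : (A ⊗[k] A) ⊗[k] A,
      Θ ((Algebra.TensorProduct.assoc k k k A A A) u) = P u := by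
    intro u
    induction u using TensorProduct.induction_on with
    | zero => simp
    | tmul w y =>
        induction w using TensorProduct.induction_on with
        | zero => simp [TensorProduct.zero_tmul]
        | tmul x1 x2 =>
            simp [Algebra.TensorProduct.assoc_tmul, hΘ, hP,
              Algebra.TensorProduct.productMap_apply_tmul, mul_assoc]
        | add u1 u2 h1 h2 =>
            rw [TensorProduct.add_tmul, map_add, map_add, h1, h2, map_add]
    | add u v hu hv => rw [map_add, map_add, hu, hv, map_add]
  have hmain := congrArg Θ htw
  rw [hPassoc, map_mul, map_mul] at hmain
  have e1 : P ((LinearMap.rTensor A (Coalgebra.comul (R := k) (A := A))) ψ)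
      = DT.sigma ψ (DT.conv f g) h := by
    have : (P.toLinearMap ∘ₗ LinearMap.rTensor A (Coalgebra.comul (R := k) (A := A)))
        = (Algebra.TensorProduct.productMap (DT.conv f g) h).toLinearMap := by
      apply TensorProduct.ext'
      intro x y
      simp only [LinearMap.comp_apply, LinearMap.rTensor_tmul, AlgHom.toLinearMap_apply,
        Algebra.TensorProduct.productMap_apply_tmul]
      rw [hPw]
      rfl
    exact congrArg (fun F : _ →ₗ[k] R => F ψ) this
  have e2 : P (ψ ⊗ₜ[k] (1 : A)) = DT.sigma ψ f g := by
    rw [hPw, map_one, mul_one]; rfl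
  have e3 : Θ ((LinearMap.lTensor A (Coalgebra.comul (R := k) (A := A))) ψ)
      = DT.sigma ψ f (DT.conv g h) := by
    have : (Θ.toLinearMap ∘ₗ LinearMap.lTensor A (Coalgebra.comul (R := k) (A := A)))
        = (Algebra.TensorProduct.productMap f (DT.conv g h)).toLinearMap := by
      apply TensorProduct.ext'
      intro x y
      simp only [LinearMap.comp_apply, LinearMap.lTensor_tmul, AlgHom.toLinearMap_apply,
        Algebra.TensorProduct.productMap_apply_tmul]
      rw [hΘw]
      rfl
    exact congrArg (fun F : _ →ₗ[k] R => F ψ) this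
  have e4 : Θ ((1 : A) ⊗ₜ[k] ψ) = DT.sigma ψ g h := by
    rw [hΘw, map_one, one_mul]; rfl
  rw [e1, e2, e3, e4] at hmain
  exact hmain

lemma DT.sigma_e_left (ψ : A ⊗[k] A)
    (h1 : (TensorProduct.lid k A)
      ((LinearMap.rTensor A (Coalgebra.counit (R := k) (A := A))) ψ) = 1)
    (f : A →ₐ[k] R) :
    DT.sigma ψ DT.convE f = 1 := by
  show DT.sigma ψ ((Algebra.ofId k R).comp (Bialgebra.counitAlgHom k A)) f = 1
  have key : (Algebra.TensorProduct.productMap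
        ((Algebra.ofId k R).comp (Bialgebra.counitAlgHom k A)) f).toLinearMap
      = f.toLinearMap ∘ₗ (TensorProduct.lid k A).toLinearMap
          ∘ₗ LinearMap.rTensor A (Coalgebra.counit (R := k) (A := A)) := by
    apply TensorProduct.ext'
    intro x y
    simp only [LinearMap.comp_apply, LinearMap.rTensor_tmul, AlgHom.toLinearMap_apply,
      LinearEquiv.coe_coe, TensorProduct.lid_tmul,
      Algebra.TensorProduct.productMap_apply_tmul, map_smul]
    rw [AlgHom.comp_apply]
    rw [Algebra.smul_def]
    rfl
  have := congrArg (fun F : _ →ₗ[k] R => F ψ) key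
  simp only [LinearMap.comp_apply, AlgHom.toLinearMap_apply, LinearEquiv.coe_coe] at this
  rw [DT.sigma, this, h1, map_one]

lemma DT.sigma_e_right (ψ : A ⊗[k] A)
    (h1 : (TensorProduct.rid k A)
      ((LinearMap.lTensor A (Coalgebra.counit (R := k) (A := A))) ψ) = 1)
    (f : A →ₐ[k] R) :
    DT.sigma ψ f DT.convE = 1 := by
  show DT.sigma ψ f ((Algebra.ofId k R).comp (Bialgebra.counitAlgHom k A)) = 1
  have key : (Algebra.TensorProduct.productMap f
        ((Algebra.ofId k R).comp (Bialgebra.counitAlgHom k A))).toLinearMap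
      = f.toLinearMap ∘ₗ (TensorProduct.rid k A).toLinearMap
          ∘ₗ LinearMap.lTensor A (Coalgebra.counit (R := k) (A := A)) := by
    apply TensorProduct.ext'
    intro x y
    simp only [LinearMap.comp_apply, LinearMap.lTensor_tmul, AlgHom.toLinearMap_apply,
      LinearEquiv.coe_coe, TensorProduct.rid_tmul,
      Algebra.TensorProduct.productMap_apply_tmul, map_smul]
    rw [AlgHom.comp_apply]
    rw [Algebra.smul_def, mul_comm]
    rfl
  have := congrArg (fun F : _ →ₗ[k] R => F ψ) key
  simp only [LinearMap.comp_apply, AlgHom.toLinearMap_apply, LinearEquiv.coe_coe] at this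
  rw [DT.sigma, this, h1, map_one]

lemma DT.point_Q (ψ : A ⊗[k] A) (Q : A)
    (hQ : Q = LinearMap.mul' k A
      ((LinearMap.rTensor A (HopfAlgebra.antipode (R := k))) ψ))
    (f : A →ₐ[k] R) (fS : A →ₐ[k] R)
    (hfS : ∀ x, fS x = f (HopfAlgebra.antipode (R := k) x)) :
    f Q = DT.sigma ψ fS f := by
  have key : (f.toLinearMap ∘ₗ LinearMap.mul' k A
        ∘ₗ LinearMap.rTensor A (HopfAlgebra.antipode (R := k) (A := A)))
      = (Algebra.TensorProduct.productMap fS f).toLinearMap := by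
    apply TensorProduct.ext'
    intro x y
    simp only [LinearMap.comp_apply, LinearMap.rTensor_tmul, LinearMap.mul'_apply,
      AlgHom.toLinearMap_apply, Algebra.TensorProduct.productMap_apply_tmul, map_mul, hfS]
  have := congrArg (fun F : _ →ₗ[k] R => F ψ) key
  simp only [LinearMap.comp_apply, AlgHom.toLinearMap_apply] at this
  rw [hQ]
  exact this

lemma DT.point_SQ (ψ : A ⊗[k] A) (Q : A)
    (hQ : Q = LinearMap.mul' k A
      ((LinearMap.rTensor A (HopfAlgebra.antipode (R := k))) ψ))
    (f : A →ₐ[k] R) :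
    f (HopfAlgebra.antipode (R := k) Q) = DT.sigma ψ f (f.comp DT.antipodeAlgHom) := by
  have h0 : f (HopfAlgebra.antipode (R := k) Q) = (f.comp DT.antipodeAlgHom) Q := rfl
  rw [h0, DT.point_Q ψ Q hQ (f.comp DT.antipodeAlgHom)
      ((f.comp DT.antipodeAlgHom).comp DT.antipodeAlgHom) (fun x => rfl),
    DT.compS_compS]

end AuxSigma

/-- `Q^{-1}·S(Q)` is a grouplike element of `O(H)`. -/
theorem Qinv_SQ_grouplike (k A : Type*) [Field k] [CommRing A] [HopfAlgebra k A]
    (ψ : A ⊗[k] A) (hψ : IsDrinfeldTwist k ψ)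
    (Q Q' : A)
    (hQ : Q = LinearMap.mul' k A
      ((LinearMap.rTensor A (HopfAlgebra.antipode (R := k))) ψ))
    (hQ1 : Q * Q' = 1) (hQ2 : Q' * Q = 1) :
    Coalgebra.comul (R := k) (Q' * HopfAlgebra.antipode (R := k) Q) =
      (Q' * HopfAlgebra.antipode (R := k) Q) ⊗ₜ[k] (Q' * HopfAlgebra.antipode (R := k) Q) ∧
    Coalgebra.counit (R := k) (Q' * HopfAlgebra.antipode (R := k) Q) = 1 := by
  obtain ⟨hunit, htw, hlid, hrid⟩ := hψ
  -- the counit part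
  have hconvEk : DT.convE (k := k) (A := A) (R := k) = Bialgebra.counitAlgHom k A := by
    ext x
    rw [DT.convE_apply]
    simp
  have hεS : (Bialgebra.counitAlgHom k A).comp DT.antipodeAlgHom
      = DT.convE (k := k) (A := A) (R := k) := by
    refine DT.conv_inv_unique (g := Bialgebra.counitAlgHom k A) ?_ ?_
    · exact (DT.conv_convE _).trans hconvEk
    · exact DT.conv_antipode_left (Bialgebra.counitAlgHom k A)
  have hQcount : Coalgebra.counit (R := k) Q = 1 := by
    have h1 : (Bialgebra.counitAlgHom k A) Q
        = DT.sigma ψ ((Bialgebra.counitAlgHom k A).comp DT.antipodeAlgHom)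
            (Bialgebra.counitAlgHom k A) :=
      DT.point_Q ψ Q hQ _ _ (fun x => rfl)
    rw [hεS, DT.sigma_e_left ψ hlid] at h1
    simpa using h1
  have hSQcount : Coalgebra.counit (R := k) (HopfAlgebra.antipode (R := k) Q) = 1 := by
    have h0 : (Bialgebra.counitAlgHom k A) (HopfAlgebra.antipode (R := k) Q)
        = ((Bialgebra.counitAlgHom k A).comp DT.antipodeAlgHom) Q := rfl
    rw [hεS, DT.convE_apply, hQcount, map_one] at h0
    simpa using h0
  have hQ'count : Coalgebra.counit (R := k) Q' = 1 := by
    have h0 := congrArg (Coalgebra.counit (R := k) (A := A)) hQ2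
    rw [Bialgebra.counit_mul, Bialgebra.counit_one, hQcount, mul_one] at h0
    exact h0
  have hcounit : Coalgebra.counit (R := k) (Q' * HopfAlgebra.antipode (R := k) Q) = 1 := by
    rw [Bialgebra.counit_mul, hQ'count, hSQcount, mul_one]
  -- the comultiplication part
  set f : A →ₐ[k] A ⊗[k] A := Algebra.TensorProduct.includeLeft with hf
  set g : A →ₐ[k] A ⊗[k] A := Algebra.TensorProduct.includeRight with hg
  set F : A →ₐ[k] A ⊗[k] A := DT.conv f g with hFdef
  have hF : ∀ x : A, F x = Coalgebra.comul (R := k) x := by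
    intro x
    let r : Coalgebra.Repr k x (A × A) := Coalgebra.Repr.arbitrary k x
    rw [hFdef, DT.conv_repr f g x r, ← r.eq]
    refine Finset.sum_congr rfl fun i _ => ?_
    simp [hf, hg, Algebra.TensorProduct.includeLeft_apply,
      Algebra.TensorProduct.includeRight_apply, Algebra.TensorProduct.tmul_mul_tmul]
  have hfQ : f Q = DT.sigma ψ (f.comp DT.antipodeAlgHom) f :=
    DT.point_Q ψ Q hQ f _ (fun x => rfl)
  have hgQ : g Q = DT.sigma ψ (g.comp DT.antipodeAlgHom) g :=
    DT.point_Q ψ Q hQ g _ (fun x => rfl)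
  have hFQ : F Q = DT.sigma ψ (F.comp DT.antipodeAlgHom) F :=
    DT.point_Q ψ Q hQ F _ (fun x => rfl)
  have hfSQ : f (HopfAlgebra.antipode (R := k) Q)
      = DT.sigma ψ f (f.comp DT.antipodeAlgHom) := DT.point_SQ ψ Q hQ f
  have hgSQ : g (HopfAlgebra.antipode (R := k) Q)
      = DT.sigma ψ g (g.comp DT.antipodeAlgHom) := DT.point_SQ ψ Q hQ g
  have hFSQ : F (HopfAlgebra.antipode (R := k) Q)
      = DT.sigma ψ F (F.comp DT.antipodeAlgHom) := DT.point_SQ ψ Q hQ F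
  have huf : IsUnit (f Q) := by rw [hfQ]; exact DT.sigma_isUnit hunit _ _
  have hug : IsUnit (g Q) := by rw [hgQ]; exact DT.sigma_isUnit hunit _ _
  have huF : IsUnit (F Q) := by rw [hFQ]; exact DT.sigma_isUnit hunit _ _
  have hfQ' : f Q' * f Q = 1 := by rw [← map_mul, hQ2, map_one]
  have hgQ' : g Q' * g Q = 1 := by rw [← map_mul, hQ2, map_one]
  have hFQ' : F Q' * F Q = 1 := by rw [← map_mul, hQ2, map_one]
  have hkey : DT.sigma ψ (f.comp DT.antipodeAlgHom) f
        * DT.sigma ψ (g.comp DT.antipodeAlgHom) g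
        * DT.sigma ψ F (F.comp DT.antipodeAlgHom)
      = DT.sigma ψ f (f.comp DT.antipodeAlgHom)
        * DT.sigma ψ g (g.comp DT.antipodeAlgHom)
        * DT.sigma ψ (F.comp DT.antipodeAlgHom) F := by
    exact DT.cocycle_key (M := DT.ConvPt k A (A ⊗[k] A))
      (fun x y => DT.sigma ψ x.f y.f)
      (fun x y => DT.sigma_isUnit hunit _ _)
      (fun x y z => DT.sigma_cocycle ψ htw x.f y.f z.f)
      (fun x => DT.sigma_e_right ψ hrid x.f)
      ⟨f⟩ ⟨g⟩ ⟨f.comp DT.antipodeAlgHom⟩ ⟨g.comp DT.antipodeAlgHom⟩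
      ⟨F.comp DT.antipodeAlgHom⟩
      (congrArg DT.ConvPt.mk (DT.conv_antipode_right f))
      (congrArg DT.ConvPt.mk (DT.conv_antipode_left f))
      (congrArg DT.ConvPt.mk (DT.conv_antipode_right g))
      (congrArg DT.ConvPt.mk (DT.conv_antipode_left g))
      (congrArg DT.ConvPt.mk (DT.conv_antipode_left F))
      (congrArg DT.ConvPt.mk (DT.conv_antipode_right F))
  have hkeyPts : f Q * g Q * F (HopfAlgebra.antipode (R := k) Q)
      = f (HopfAlgebra.antipode (R := k) Q) * g (HopfAlgebra.antipode (R := k) Q) * F Q := by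
    rw [hfQ, hgQ, hFSQ, hfSQ, hgSQ, hFQ]
    exact hkey
  have key : F Q' * F (HopfAlgebra.antipode (R := k) Q)
      = (f Q' * f (HopfAlgebra.antipode (R := k) Q))
        * (g Q' * g (HopfAlgebra.antipode (R := k) Q)) := by
    have hu : IsUnit (f Q * (g Q * F Q)) := huf.mul (hug.mul huF)
    refine hu.mul_left_cancel ?_
    calc f Q * (g Q * F Q) * (F Q' * F (HopfAlgebra.antipode (R := k) Q))
        = (F Q' * F Q) * (f Q * g Q * F (HopfAlgebra.antipode (R := k) Q)) := by ring
      _ = (F Q' * F Q) * (f (HopfAlgebra.antipode (R := k) Q)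
            * g (HopfAlgebra.antipode (R := k) Q) * F Q) := by rw [hkeyPts]
      _ = f (HopfAlgebra.antipode (R := k) Q)
            * g (HopfAlgebra.antipode (R := k) Q) * F Q := by rw [hFQ', one_mul]
      _ = (f Q' * f Q) * ((g Q' * g Q) * (f (HopfAlgebra.antipode (R := k) Q)
            * g (HopfAlgebra.antipode (R := k) Q) * F Q)) := by
          rw [hfQ', hgQ', one_mul, one_mul]
      _ = f Q * (g Q * F Q) * ((f Q' * f (HopfAlgebra.antipode (R := k) Q))
            * (g Q' * g (HopfAlgebra.antipode (R := k) Q))) := by ring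
  have hL : Coalgebra.comul (R := k) (Q' * HopfAlgebra.antipode (R := k) Q)
      = F Q' * F (HopfAlgebra.antipode (R := k) Q) := by
    rw [← hF, map_mul]
  have hR : (Q' * HopfAlgebra.antipode (R := k) Q) ⊗ₜ[k]
        (Q' * HopfAlgebra.antipode (R := k) Q)
      = (f Q' * f (HopfAlgebra.antipode (R := k) Q))
        * (g Q' * g (HopfAlgebra.antipode (R := k) Q)) := by
    rw [← map_mul f, ← map_mul g]
    simp [hf, hg, Algebra.TensorProduct.includeLeft_apply,
      Algebra.TensorProduct.includeRight_apply, Algebra.TensorProduct.tmul_mul_tmul]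
  exact ⟨hL.trans (key.trans hR.symm), hcounit⟩
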